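/- For the 2-leg spider with span bounded by s≥2 on ℤ with rates q(x,x+1)=p, q(x,x−1)=q, the distance between the two legs under the jump chain of the spider is a Markov chain on {1,…,s}, namely the simple random walk reflected at 1 and s (from 1 it moves to 2 with probability 1, from s to s−1 with probability 1, and from interior states to each neighbour with probability 1/2), and its unique stationary distribution Π is given by Π(1)=Π(s)=1/(2s−2) and Π(i)=1/(s−1) for 1<i<s. -/

import Mathlib

/-!
From a configuration at leg distance `n`, each of the four moves changes `x₁ - x₂` by `±1`:
the two moves that increase the distance have total rate `p + q`, and so do the two that
decrease it. Hence the jump chain moves the distance up or down with probability `1/2`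
each, unless one direction is suppressed (at `n = 1` or `n = s`), where it moves to the
other side with probability `1`.

The reflected walk is reversible: across every edge `{i, i + 1}` of `{1, …, s}`,
`Π(i) K(i, i + 1) = Π(i + 1) K(i + 1, i) = 1 / (2s - 2)`, which gives stationarity of `Π`.
The stationary equation at `j` determines `π(j + 1)` from `π(j)` and `π(j - 1)`, so a
stationary vector vanishing at `0` is a multiple of `Π`, and normalisation forces it to be `Π`.
-/

open scoped ENNReal

/-- Configurations of the 2-leg spider with span bounded by `s` on ℤ. -/
def Sp (s : ℕ) : Type := {c : ℤ × ℤ // c.1 ≠ c.2 ∧ (c.1 - c.2).natAbs ≤ s}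

/-- Rates of the underlying walk on ℤ. -/
noncomputable def qZ (p q : ℝ) (x y : ℤ) : ℝ≥0∞ :=
  if y = x + 1 then ENNReal.ofReal p else if y = x - 1 then ENNReal.ofReal q else 0

open Classical in
/-- Spider rates: exactly one leg moves, with the rate of the underlying walk;
moves violating the constraints (encoded in `Sp s`) are suppressed. -/
noncomputable def spRate (p q : ℝ) {s : ℕ} (c d : Sp s) : ℝ≥0∞ :=
  (if c.1.2 = d.1.2 ∧ c.1.1 ≠ d.1.1 then qZ p q c.1.1 d.1.1 else 0) +
  (if c.1.1 = d.1.1 ∧ c.1.2 ≠ d.1.2 then qZ p q c.1.2 d.1.2 else 0)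

/-- Jump chain of a continuous-time chain with rates `q`. -/
noncomputable def jumpChain {S : Type*} (q : S → S → ℝ≥0∞) : S → S → ℝ≥0∞ :=
  fun x y => q x y / ∑' z, q x z

/-- The distance between the two legs of a configuration. -/
def legDist {s : ℕ} (c : Sp s) : ℕ := (c.1.1 - c.1.2).natAbs

open Classical in
/-- The kernel of the simple random walk on {1,…,s} reflected at 1 and s. -/
noncomputable def reflK (s : ℕ) (i j : ℕ) : ℝ :=
  if i = 1 then (if j = 2 then 1 else 0)
  else if i = s then (if j = s - 1 then 1 else 0)
  else if 1 < i ∧ i < s then (if j = i + 1 ∨ j = i - 1 then 1 / 2 else 0)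
  else 0

open Classical in
/-- The claimed stationary distribution. -/
noncomputable def piDist (s : ℕ) (i : ℕ) : ℝ :=
  if i = 1 ∨ i = s then 1 / (2 * (s : ℝ) - 2)
  else if 1 < i ∧ i < s then 1 / ((s : ℝ) - 1)
  else 0


lemma tsum_subtype_ite_val_eq {α M : Type*} [AddCommMonoid M] [TopologicalSpace M]
    [DecidableEq α] {P : α → Prop} [DecidablePred P] (a : α) (f : α → M) :
    ∑' x : Subtype P, (if x.1 = a then f x.1 else 0) = if P a then f a else 0 := by
  by_cases ha : P a
  · rw [if_pos ha, ← tsum_ite_eq (⟨a, ha⟩ : Subtype P) (fun x => f x.1)]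
    exact tsum_congr fun x => if_congr (by rw [Subtype.ext_iff]) rfl rfl
  · rw [if_neg ha]
    exact (tsum_congr fun x : Subtype P => if_neg fun h : x.1 = a => ha (h ▸ x.2)).trans tsum_zero

lemma tsum_ite_jumpChain {S : Type*} (r : S → S → ℝ≥0∞) (P : S → Prop) [DecidablePred P]
    (x : S) :
    ∑' y, (if P y then jumpChain r x y else 0) =
      (∑' y, if P y then r x y else 0) / ∑' y, r x y := by
  simp only [jumpChain, div_eq_mul_inv, ← ENNReal.tsum_mul_right, ite_mul, zero_mul]

lemma spRate_apply (p q : ℝ) {s : ℕ} (c d : Sp s) :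
    spRate p q c d =
      (if d.1 = (c.1.1 + 1, c.1.2) then ENNReal.ofReal p else 0) +
      (if d.1 = (c.1.1 - 1, c.1.2) then ENNReal.ofReal q else 0) +
      (if d.1 = (c.1.1, c.1.2 + 1) then ENNReal.ofReal p else 0) +
      (if d.1 = (c.1.1, c.1.2 - 1) then ENNReal.ofReal q else 0) := by
  obtain ⟨⟨x₁, x₂⟩, -⟩ := c
  obtain ⟨⟨y₁, y₂⟩, -⟩ := d
  simp only [spRate, qZ, Prod.mk.injEq]
  split_ifs <;> first | omega | simp

lemma Int.apply_natAbs_add_one_add_apply_natAbs_sub_one {M : Type*} [AddCommMagma M]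
    (g : ℕ → M) {δ : ℤ} (hδ : δ ≠ 0) :
    g (δ + 1).natAbs + g (δ - 1).natAbs = g (δ.natAbs + 1) + g (δ.natAbs - 1) := by
  rcases hδ.lt_or_gt with h | h
  · rw [show (δ + 1).natAbs = δ.natAbs - 1 by omega, show (δ - 1).natAbs = δ.natAbs + 1 by omega,
      add_comm]
  · rw [show (δ + 1).natAbs = δ.natAbs + 1 by omega, show (δ - 1).natAbs = δ.natAbs - 1 by omega]

lemma tsum_ite_spRate (p q : ℝ) {s : ℕ} (ψ : ℕ → Prop) [DecidablePred ψ] (c : Sp s) :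
    ∑' d : Sp s, (if ψ (legDist d) then spRate p q c d else 0) =
      (if legDist c + 1 ≤ s ∧ ψ (legDist c + 1) then ENNReal.ofReal p + ENNReal.ofReal q else 0) +
      (if 2 ≤ legDist c ∧ ψ (legDist c - 1) then ENNReal.ofReal p + ENNReal.ofReal q else 0) := by
  let f (w : ℝ≥0∞) (z : ℤ × ℤ) : ℝ≥0∞ := if ψ (z.1 - z.2).natAbs then w else 0
  let g (w : ℝ≥0∞) (m : ℕ) : ℝ≥0∞ := if (0 < m ∧ m ≤ s) ∧ ψ m then w else 0
  have hterm : ∀ d : Sp s, (if ψ (legDist d) then spRate p q c d else 0) =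
      (if d.1 = (c.1.1 + 1, c.1.2) then f (ENNReal.ofReal p) d.1 else 0) +
      (if d.1 = (c.1.1 - 1, c.1.2) then f (ENNReal.ofReal q) d.1 else 0) +
      (if d.1 = (c.1.1, c.1.2 + 1) then f (ENNReal.ofReal p) d.1 else 0) +
      (if d.1 = (c.1.1, c.1.2 - 1) then f (ENNReal.ofReal q) d.1 else 0) := by
    intro d
    rw [spRate_apply]
    simp only [f, legDist]
    by_cases h : ψ (d.1.1 - d.1.2).natAbs <;> simp [h]
  have hvalid : ∀ w (z : ℤ × ℤ),
      (if z.1 ≠ z.2 ∧ (z.1 - z.2).natAbs ≤ s then f w z else 0) = g w (z.1 - z.2).natAbs := by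
    intro w z
    simp only [f, g, Int.natAbs_pos, sub_ne_zero, ← ite_and]
  rw [tsum_congr hterm, ENNReal.tsum_add, ENNReal.tsum_add, ENNReal.tsum_add]
  -- `erw`: `Sp s` is a subtype only up to unfolding its definition
  erw [tsum_subtype_ite_val_eq, tsum_subtype_ite_val_eq, tsum_subtype_ite_val_eq,
    tsum_subtype_ite_val_eq]
  rw [hvalid, hvalid, hvalid, hvalid]
  obtain ⟨⟨x₁, x₂⟩, hne, -⟩ := c
  simp only [legDist, show x₁ + 1 - x₂ = x₁ - x₂ + 1 by ring,
    show x₁ - 1 - x₂ = x₁ - x₂ - 1 by ring, show x₁ - (x₂ + 1) = x₁ - x₂ - 1 by ring,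
    show x₁ - (x₂ - 1) = x₁ - x₂ + 1 by ring]
  set P := ENNReal.ofReal p
  set Q := ENNReal.ofReal q
  have hg : ∀ m, g P m + g Q m = g (P + Q) m := fun m => ite_add_zero.symm
  rw [show ∀ a b, g P a + g Q b + g P b + g Q a = (g P a + g Q a) + (g P b + g Q b) by
      intros; ring, hg, hg,
    Int.apply_natAbs_add_one_add_apply_natAbs_sub_one (g (P + Q)) (sub_ne_zero.2 hne)]
  congr 1 <;> exact if_congr (Iff.and (by omega) Iff.rfl) rfl rfl

section

variable {s i j : ℕ}

lemma reflK_one : reflK s 1 j = if j = 2 then 1 else 0 := by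
  simp [reflK]

lemma reflK_self (hs : s ≠ 1) (j : ℕ) : reflK s s j = if j = s - 1 then 1 else 0 := by
  simp [reflK, hs]

lemma reflK_of_lt_of_lt (h1 : 1 < i) (h2 : i < s) (j : ℕ) :
    reflK s i j = if j = i + 1 ∨ j = i - 1 then 1 / 2 else 0 := by
  rw [reflK, if_neg h1.ne', if_neg h2.ne, if_pos ⟨h1, h2⟩]

lemma reflK_eq_zero (hs : s ≠ 0) (h : ¬(i ≤ s ∧ (j = i + 1 ∨ j + 1 = i))) :
    reflK s i j = 0 := by
  unfold reflK
  split_ifs <;> first | rfl | omega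

lemma sum_mul_reflK (hs : s ≠ 0) (π : ℕ → ℝ) (hj1 : 1 ≤ j) (hjs : j ≤ s) :
    ∑ i ∈ Finset.range (s + 1), π i * reflK s i j =
      π (j - 1) * reflK s (j - 1) j + π (j + 1) * reflK s (j + 1) j := by
  refine Finset.sum_eq_add (j - 1) (j + 1) (by omega) (fun i _ hi => ?_)
    (fun h => absurd (Finset.mem_range.2 (by omega)) h) (fun h => ?_)
  · rw [reflK_eq_zero hs (by omega), mul_zero]
  · rw [reflK_eq_zero hs (by simp at h; omega), mul_zero]

lemma ite_add_ite_div_eq_reflK {R : ℝ≥0∞} (h0 : R ≠ 0) (htop : R ≠ ⊤) {n : ℕ} (l : ℕ)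
    (hs : 2 ≤ s) (hn : 1 ≤ n) (hns : n ≤ s) :
    ((if n + 1 ≤ s ∧ n + 1 = l then R else 0) + (if 2 ≤ n ∧ n - 1 = l then R else 0)) /
        ((if n + 1 ≤ s then R else 0) + (if 2 ≤ n then R else 0)) =
      ENNReal.ofReal (reflK s n l) := by
  obtain rfl | hn := hn.eq_or_lt
  · rw [reflK_one]
    rcases eq_or_ne l 2 with rfl | hl
    · simp [hs, ENNReal.div_self h0 htop]
    · simp [hl, hl.symm]
  replace hn : 2 ≤ n := hn
  obtain rfl | hns := hns.eq_or_lt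
  · rw [reflK_self (by omega)]
    rcases eq_or_ne l (n - 1) with rfl | hl
    · simp [hn, ENNReal.div_self h0 htop]
    · simp [hl, hl.symm]
  rw [reflK_of_lt_of_lt hn hns, if_pos (show n + 1 ≤ s from hns), if_pos hn]
  have hR : R / (R + R) = 2⁻¹ := by
    rw [← two_mul, ← one_div, ← ENNReal.mul_div_mul_right 1 2 h0 htop, one_mul]
  rcases eq_or_ne l (n + 1) with rfl | hl
  · rw [if_pos ⟨hns, rfl⟩, if_neg (by omega), add_zero, hR, if_pos (Or.inl rfl)]
    simp
  rcases eq_or_ne l (n - 1) with rfl | hl'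
  · rw [if_neg (by omega), if_pos ⟨hn, rfl⟩, zero_add, hR, if_pos (Or.inr rfl)]
    simp
  · rw [if_neg (by omega), if_neg (by omega), if_neg (by omega)]
    simp

lemma tsum_ite_legDist_jumpChain_spRate {p : ℝ} (hp : 0 < p) (q : ℝ) (hs : 2 ≤ s)
    (c : Sp s) (l : ℕ) :
    ∑' d : Sp s, (if legDist d = l then jumpChain (spRate p q) c d else 0) =
      ENNReal.ofReal (reflK s (legDist c) l) := by
  have htotal := tsum_ite_spRate p q (fun _ => True) c
  simp only [if_true, and_true] at htotal
  rw [tsum_ite_jumpChain, tsum_ite_spRate p q (· = l), htotal]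
  refine ite_add_ite_div_eq_reflK ?_ ?_ l hs (Int.natAbs_pos.2 (sub_ne_zero.2 c.2.1)) c.2.2
  · exact add_ne_zero.2 (Or.inl (ENNReal.ofReal_pos.2 hp).ne')
  · exact ENNReal.add_ne_top.2 ⟨ENNReal.ofReal_ne_top, ENNReal.ofReal_ne_top⟩

lemma piDist_one : piDist s 1 = 1 / (2 * s - 2) := by
  simp [piDist]

lemma piDist_self : piDist s s = 1 / (2 * s - 2) := by
  simp [piDist]

lemma piDist_of_lt_of_lt (h1 : 1 < i) (h2 : i < s) : piDist s i = 1 / (s - 1) := by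
  rw [piDist, if_neg (by omega), if_pos ⟨h1, h2⟩]

lemma piDist_eq_zero (hs : s ≠ 0) (h : i = 0 ∨ s < i) : piDist s i = 0 := by
  rw [piDist, if_neg (by omega), if_neg (by omega)]

lemma piDist_nonneg (hs : 1 ≤ s) (i : ℕ) : 0 ≤ piDist s i := by
  have : (1 : ℝ) ≤ s := by exact_mod_cast hs
  unfold piDist
  split_ifs <;> first | exact le_rfl | exact div_nonneg zero_le_one (by linarith)

lemma sum_range_piDist (hs : 2 ≤ s) : ∑ i ∈ Finset.range (s + 1), piDist s i = 1 := by
  obtain ⟨n, rfl⟩ := Nat.exists_eq_add_of_le' hs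
  have hmid : ∀ i ∈ Finset.range n, piDist (n + 2) (i + 1 + 1) = 1 / (n + 1) := by
    intro i hi
    rw [piDist_of_lt_of_lt (by omega) (by simp at hi; omega)]
    push_cast; ring
  rw [Finset.sum_range_succ, Finset.sum_range_succ', Finset.sum_range_succ',
    Finset.sum_congr rfl hmid, zero_add, piDist_one, piDist_self,
    piDist_eq_zero (by omega) (Or.inl rfl), Finset.sum_const, Finset.card_range,
    nsmul_eq_mul]
  push_cast
  rw [show 2 * ((n : ℝ) + 2) - 2 = 2 * (n + 1) by ring]
  field_simp
  ring

lemma piDist_mul_reflK_succ (h1 : 1 ≤ i) (h2 : i < s) :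
    piDist s i * reflK s i (i + 1) = 1 / (2 * s - 2) := by
  obtain rfl | h1 := h1.eq_or_lt
  · rw [piDist_one, reflK_one, if_pos rfl, mul_one]
  · rw [piDist_of_lt_of_lt h1 h2, reflK_of_lt_of_lt h1 h2, if_pos (Or.inl rfl), div_mul_div_comm,
      one_mul]
    ring_nf

lemma piDist_succ_mul_reflK (h1 : 1 ≤ i) (h2 : i < s) :
    piDist s (i + 1) * reflK s (i + 1) i = 1 / (2 * s - 2) := by
  obtain h | h2 := (show i + 1 ≤ s from h2).eq_or_lt
  · rw [h, piDist_self, reflK_self (by omega), if_pos (by omega), mul_one]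
  · rw [piDist_of_lt_of_lt (by omega) h2, reflK_of_lt_of_lt (by omega) h2,
      if_pos (Or.inr (Nat.add_sub_cancel i 1).symm), div_mul_div_comm, one_mul]
    ring_nf

lemma sum_piDist_mul_reflK (hs : 2 ≤ s) (hj1 : 1 ≤ j) (hjs : j ≤ s) :
    ∑ i ∈ Finset.range (s + 1), piDist s i * reflK s i j = piDist s j := by
  rw [sum_mul_reflK (by omega) _ hj1 hjs]
  obtain rfl | hj1 := hj1.eq_or_lt
  · rw [piDist_eq_zero (by omega) (Or.inl rfl), zero_mul, zero_add,
      piDist_succ_mul_reflK le_rfl (by omega), piDist_one]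
  obtain ⟨i, rfl⟩ : ∃ i, j = i + 1 := ⟨j - 1, by omega⟩
  rw [Nat.add_sub_cancel, piDist_mul_reflK_succ (by omega) (by omega)]
  obtain rfl | hjs := hjs.eq_or_lt
  · rw [piDist_eq_zero (by omega) (Or.inr (by omega)), zero_mul, add_zero, piDist_self]
  · have : (s : ℝ) - 1 ≠ 0 := by
      have : (2 : ℝ) ≤ s := by exact_mod_cast hs
      linarith
    rw [piDist_succ_mul_reflK (by omega) hjs, piDist_of_lt_of_lt hj1 hjs]
    field_simp
    ring

lemma eq_zero_of_sum_mul_reflK_eq (hs : 2 ≤ s) {d : ℕ → ℝ} (h0 : d 0 = 0) (h1 : d 1 = 0)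
    (hd : ∀ j, 1 ≤ j → j ≤ s → ∑ i ∈ Finset.range (s + 1), d i * reflK s i j = d j) :
    ∀ i ≤ s, d i = 0 := by
  have hpair : ∀ i, i + 1 ≤ s → d i = 0 ∧ d (i + 1) = 0 := by
    intro i
    induction i with
    | zero => exact fun _ => ⟨h0, h1⟩
    | succ i ih =>
      intro hi
      obtain ⟨hi0, hi1⟩ := ih (by omega)
      have h := hd (i + 1) (by omega) (by omega)
      rw [sum_mul_reflK (by omega) _ (by omega) (by omega), Nat.add_sub_cancel, hi0, hi1,
        zero_mul, zero_add] at h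
      have hK : reflK s (i + 1 + 1) (i + 1) ≠ 0 := by
        refine right_ne_zero_of_mul (a := piDist s (i + 1 + 1)) ?_
        rw [piDist_succ_mul_reflK (by omega) (by omega)]
        have : (2 : ℝ) ≤ s := by exact_mod_cast hs
        exact one_div_ne_zero (by linarith)
      exact ⟨hi1, (mul_eq_zero.1 h).resolve_right hK⟩
  intro i hi
  cases i with
  | zero => exact h0
  | succ i => exact (hpair i hi).2

lemma eq_piDist_of_sum_mul_reflK_eq (hs : 2 ≤ s) {π : ℕ → ℝ}
    (hsupp : ∀ i, (i = 0 ∨ s < i) → π i = 0) (hsum : ∑ i ∈ Finset.range (s + 1), π i = 1)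
    (hπ : ∀ j, 1 ≤ j → j ≤ s → ∑ i ∈ Finset.range (s + 1), π i * reflK s i j = π j) :
    π = piDist s := by
  have hs' : (2 : ℝ) ≤ s := by exact_mod_cast hs
  have hpi1 : piDist s 1 ≠ 0 := by
    rw [piDist_one]
    exact one_div_ne_zero (by linarith)
  set c := π 1 / piDist s 1
  have hdiff : ∀ i ≤ s, π i - c * piDist s i = 0 := by
    refine eq_zero_of_sum_mul_reflK_eq hs ?_ ?_ fun j hj1 hjs => ?_
    · rw [hsupp 0 (Or.inl rfl), piDist_eq_zero (by omega) (Or.inl rfl), mul_zero, sub_zero]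
    · rw [div_mul_cancel₀ _ hpi1, sub_self]
    · simp only [sub_mul, Finset.sum_sub_distrib, mul_assoc, ← Finset.mul_sum, hπ j hj1 hjs,
        sum_piDist_mul_reflK hs hj1 hjs]
  have hπc : ∀ i, π i = c * piDist s i := by
    intro i
    by_cases hi : i ≤ s
    · exact sub_eq_zero.1 (hdiff i hi)
    · rw [hsupp i (Or.inr (by omega)), piDist_eq_zero (by omega) (Or.inr (by omega)),
        mul_zero]
  have hc : c = 1 := by
    simpa [hπc, ← Finset.mul_sum, sum_range_piDist hs] using hsum
  funext i
  rw [hπc, hc, one_mul]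

end

theorem spider_leg_distance_reflected_walk_general
    (p q : ℝ) (hp : 0 < p) (s : ℕ) (hs : 2 ≤ s) :
    -- the leg-distance process under the jump chain of the spider is a Markov
    -- chain on {1,…,s} with kernel `reflK s` (lumpability):
    (∀ c : Sp s, ∀ l' : ℕ,
      (∑' d : Sp s, if legDist d = l' then jumpChain (spRate p q) c d else 0)
        = ENNReal.ofReal (reflK s (legDist c) l')) ∧
    -- `piDist s` is a stationary distribution for `reflK s`:
    (∀ i : ℕ, 0 ≤ piDist s i) ∧
    (∑ i ∈ Finset.range (s + 1), piDist s i = 1) ∧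
    (∀ j : ℕ, 1 ≤ j → j ≤ s →
      ∑ i ∈ Finset.range (s + 1), piDist s i * reflK s i j = piDist s j) ∧
    -- and it is the unique such stationary distribution:
    (∀ π : ℕ → ℝ, (∀ i, 0 ≤ π i) → (∀ i, (i = 0 ∨ s < i) → π i = 0) →
      (∑ i ∈ Finset.range (s + 1), π i = 1) →
      (∀ j : ℕ, 1 ≤ j → j ≤ s →
        ∑ i ∈ Finset.range (s + 1), π i * reflK s i j = π j) →
      π = piDist s) :=
  ⟨tsum_ite_legDist_jumpChain_spRate hp q hs, piDist_nonneg (by omega), sum_range_piDist hs,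
    fun _ => sum_piDist_mul_reflK hs, fun _ _ => eq_piDist_of_sum_mul_reflK_eq hs⟩

theorem spider_leg_distance_reflected_walk
    (p q : ℝ) (hp : 0 < p) (hq : 0 < q) (s : ℕ) (hs : 2 ≤ s) :
    -- the leg-distance process under the jump chain of the spider is a Markov
    -- chain on {1,…,s} with kernel `reflK s` (lumpability):
    (∀ c : Sp s, ∀ l' : ℕ,
      (∑' d : Sp s, if legDist d = l' then jumpChain (spRate p q) c d else 0)
        = ENNReal.ofReal (reflK s (legDist c) l')) ∧
    -- `piDist s` is a stationary distribution for `reflK s`: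
    (∀ i : ℕ, 0 ≤ piDist s i) ∧
    (∑ i ∈ Finset.range (s + 1), piDist s i = 1) ∧
    (∀ j : ℕ, 1 ≤ j → j ≤ s →
      ∑ i ∈ Finset.range (s + 1), piDist s i * reflK s i j = piDist s j) ∧
    -- and it is the unique such stationary distribution:
    (∀ π : ℕ → ℝ, (∀ i, 0 ≤ π i) → (∀ i, (i = 0 ∨ s < i) → π i = 0) →
      (∑ i ∈ Finset.range (s + 1), π i = 1) →
      (∀ j : ℕ, 1 ≤ j → j ≤ s →
        ∑ i ∈ Finset.range (s + 1), π i * reflK s i j = π j) →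
      π = piDist s) :=
  spider_leg_distance_reflected_walk_general p q hp s hs
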